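/- arXiv:2201.11570 — 3 statements merged into one kernel-verified Lean document; each statement's English description precedes it below -/
import Mathlib

section
/- For any natural number n and real numbers α₁,...,αₙ: ∑_{i=1}^n (-1)^i · sin(αᵢ) · sin( ∑_{j=1}^{i-1} (-1)^j αⱼ − ∑_{j=i+1}^n (-1)^j αⱼ ) = 0. -/
open Finset

lemma sin_mul_sin_eq (A B s : ℝ) :
    Real.sin s * Real.sin (A - B)
      = (Real.cos (A - (s + B)) - Real.cos ((A + s) - B)) / 2 := by
  rw [Real.cos_sub_cos,
    show (A - (s + B) + ((A + s) - B)) / 2 = A - B by ring,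
    show (A - (s + B) - ((A + s) - B)) / 2 = -s by ring,
    Real.sin_neg]
  ring

theorem alternating_sin_sum (n : ℕ) (α : ℕ → ℝ) :
    ∑ i ∈ Finset.Icc 1 n, (-1 : ℝ)^i * Real.sin (α i) *
      Real.sin ((∑ j ∈ Finset.Icc 1 (i-1), (-1 : ℝ)^j * α j) -
        ∑ j ∈ Finset.Icc (i+1) n, (-1 : ℝ)^j * α j) = 0 := by
  set g : ℕ → ℝ := fun i =>
    Real.cos ((∑ j ∈ Finset.Icc 1 i, (-1 : ℝ)^j * α j) -
      ∑ j ∈ Finset.Icc (i+1) n, (-1 : ℝ)^j * α j) / 2 with hg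
  have key : ∀ i ∈ Finset.Icc 1 n,
      (-1 : ℝ)^i * Real.sin (α i) *
      Real.sin ((∑ j ∈ Finset.Icc 1 (i-1), (-1 : ℝ)^j * α j) -
        ∑ j ∈ Finset.Icc (i+1) n, (-1 : ℝ)^j * α j) = g (i-1) - g i := by
    intro i hi
    simp only [Finset.mem_Icc] at hi
    obtain ⟨h1, h2⟩ := hi
    obtain ⟨k, rfl⟩ : ∃ k, i = k + 1 := ⟨i - 1, by omega⟩
    simp only [hg, Nat.add_sub_cancel]
    have hsplit : ∑ j ∈ Finset.Icc (k+1) n, (-1 : ℝ)^j * α j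
        = (-1:ℝ)^(k+1) * α (k+1) + ∑ j ∈ Finset.Icc (k+2) n, (-1 : ℝ)^j * α j := by
      have : Finset.Icc (k+1) n = insert (k+1) (Finset.Icc (k+2) n) := by
        ext x; simp [Finset.mem_Icc, Finset.mem_insert]; omega
      rw [this, Finset.sum_insert (by simp [Finset.mem_Icc])]
    have htop : ∑ j ∈ Finset.Icc 1 (k+1), (-1 : ℝ)^j * α j
        = (∑ j ∈ Finset.Icc 1 k, (-1 : ℝ)^j * α j) + (-1:ℝ)^(k+1) * α (k+1) := by
      rw [Finset.sum_Icc_succ_top (by omega : 1 ≤ k + 1)]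
    set A := ∑ j ∈ Finset.Icc 1 k, (-1 : ℝ)^j * α j
    set B := ∑ j ∈ Finset.Icc (k+2) n, (-1 : ℝ)^j * α j
    rw [hsplit, htop]
    set s := α (k+1)
    have hsin : Real.sin ((-1:ℝ)^(k+1) * s) = (-1:ℝ)^(k+1) * Real.sin s := by
      rcases Nat.even_or_odd (k+1) with h | h
      · rw [h.neg_one_pow]; simp
      · rw [h.neg_one_pow]; simp
    have := sin_mul_sin_eq A B ((-1:ℝ)^(k+1) * s)
    rw [hsin] at this
    have hpow : ((-1:ℝ)^(k+1))^2 = 1 := by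
      rw [← pow_mul, pow_mul']; norm_num
    nlinarith [this, hpow]
  rw [Finset.sum_congr rfl key]
  have hrange : ∑ i ∈ Finset.Icc 1 n, (g (i-1) - g i)
      = ∑ i ∈ Finset.range n, (g i - g (i+1)) := by
    rw [show Finset.Icc 1 n = Finset.Ico 1 (n+1) by ext x; simp [Finset.mem_Icc, Finset.mem_Ico],
      Finset.sum_Ico_eq_sum_range]
    apply Finset.sum_congr (by norm_num)
    intro i _
    congr 1 <;> congr 1 <;> omega
  rw [hrange, Finset.sum_range_sub' g]
  simp only [hg]
  rw [show Finset.Icc (n+1) n = ∅ by simp, show Finset.Icc 1 0 = ∅ by simp]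
  simp [Real.cos_neg]
end

section
/- For any odd natural number n and real numbers α₁,...,αₙ: ∑_{i=1}^n (-1)^i · cos(αᵢ) · sin( ∑_{j=1}^{i-1} (-1)^j αⱼ − ∑_{j=i+1}^n (-1)^j αⱼ ) = 0. -/
open Finset

lemma tele_aux (m : ℕ) (h : ℕ → ℝ) :
    ∑ i ∈ Finset.Icc 1 m, (-1 : ℝ)^i * (h i + h (i-1)) = (-1)^m * h m - h 0 := by
  induction m with
  | zero => simp
  | succ m ih =>
      rw [Finset.sum_Icc_succ_top (by omega : 1 ≤ m + 1), ih]
      simp [pow_succ]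
      ring

theorem alternating_cos_sum_odd (n : ℕ) (hn : Odd n) (α : ℕ → ℝ) :
    ∑ i ∈ Finset.Icc 1 n, (-1 : ℝ)^i * Real.cos (α i) *
      Real.sin ((∑ j ∈ Finset.Icc 1 (i-1), (-1 : ℝ)^j * α j) -
        ∑ j ∈ Finset.Icc (i+1) n, (-1 : ℝ)^j * α j) = 0 := by
  set c : ℕ → ℝ := fun j => (-1 : ℝ)^j * α j with hc
  set S : ℕ → ℝ := fun i => (∑ j ∈ Finset.Icc 1 i, c j) - ∑ j ∈ Finset.Icc (i+1) n, c j
    with hS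
  have key : ∀ i ∈ Finset.Icc 1 n,
      (-1 : ℝ)^i * Real.cos (α i) *
        Real.sin ((∑ j ∈ Finset.Icc 1 (i-1), c j) - ∑ j ∈ Finset.Icc (i+1) n, c j)
      = (1/2) * ((-1 : ℝ)^i * (Real.sin (S i) + Real.sin (S (i-1)))) := by
    intro i hi
    simp only [Finset.mem_Icc] at hi
    obtain ⟨h1, h2⟩ := hi
    obtain ⟨b, hb⟩ : ∃ b : ℝ,
        b = (∑ j ∈ Finset.Icc 1 (i-1), c j) - ∑ j ∈ Finset.Icc (i+1) n, c j := ⟨_, rfl⟩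
    rw [← hb]
    have hSi : S i = b + c i := by
      have h4 : ∑ j ∈ Finset.Icc 1 i, c j = (∑ j ∈ Finset.Icc 1 (i-1), c j) + c i := by
        have h5 := Finset.sum_Icc_succ_top (by omega : 1 ≤ (i-1) + 1) c
        rw [show (i-1)+1 = i by omega] at h5
        exact h5
      simp only [hS, h4, hb]; ring
    have hSim : S (i-1) = b - c i := by
      have h3 : ∑ j ∈ Finset.Icc i n, c j = c i + ∑ j ∈ Finset.Icc (i+1) n, c j := by
        rw [← Finset.Ico_add_one_right_eq_Icc, ← Finset.Ico_add_one_right_eq_Icc,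
          Finset.sum_eq_sum_Ico_succ_bot (by omega : i < n + 1)]
      simp only [hS, hb, show (i-1)+1 = i by omega, h3]; ring
    have hcos : Real.cos (c i) = Real.cos (α i) := by
      rcases Nat.even_or_odd i with h | h
      · rw [hc]; simp [h.neg_one_pow]
      · rw [hc]; simp [h.neg_one_pow]
    have hsum : Real.sin (S i) + Real.sin (S (i-1)) = 2 * Real.sin b * Real.cos (α i) := by
      rw [hSi, hSim, Real.sin_add, Real.sin_sub, hcos]; ring
    rw [hsum]; ring
  have ht := tele_aux n (fun i => Real.sin (S i))
  rw [Finset.sum_congr rfl key, ← Finset.mul_sum, ht, hn.neg_one_pow]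
  have h0 : S 0 = -(∑ j ∈ Finset.Icc 1 n, c j) := by simp [hS]
  have hn' : S n = ∑ j ∈ Finset.Icc 1 n, c j := by
    simp [hS, Finset.Icc_eq_empty_of_lt (by omega : n < n + 1)]
  rw [h0, hn', Real.sin_neg]
  ring
end

section
/- Let a_{i,j} (1 ≤ i,j ≤ 2n) be commuting indeterminates with a_{i,j} = a_{j,i}, and let pf_{2n} = Σ_{α ∈ S_{2n,pf}} sign(α) a_{i₁,j₁}···a_{iₙ,jₙ} be the Pfaffian polynomial of the symmetric array. Then pf_{2n} is invariant under the cyclic permutation σ(i) = i+1 (mod 2n) acting by σ·a_{i,j} = a_{σ^{-1}(i),σ^{-1}(j)}. -/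
open Finset MvPolynomial

/-- The set of Pfaff permutations of `{0, ..., 2n-1}`. -/
def pfaffPerms (n : ℕ) : Finset (Equiv.Perm (Fin (2*n))) :=
  Finset.univ.filter fun σ =>
    (∀ k : Fin n, σ ⟨2*k.1, by have := k.2; omega⟩ < σ ⟨2*k.1+1, by have := k.2; omega⟩) ∧
    ∀ k l : Fin n, k < l →
      σ ⟨2*k.1, by have := k.2; omega⟩ < σ ⟨2*l.1, by have := l.2; omega⟩

/-- The Pfaffian polynomial in symmetric commuting indeterminates `a i j = a j i`,
realized as a multivariate polynomial whose variables are indexed by unordered pairs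
`Sym2 (Fin (2n))` (so that the symmetry `a i j = a j i` holds by construction):
`pf₂ₙ = Σ_{α ∈ S₂ₙ,pf} sign α · a_{i₁j₁} ⋯ a_{iₙjₙ}`. -/
noncomputable def pfPoly (n : ℕ) (K : Type*) [CommRing K] :
    MvPolynomial (Sym2 (Fin (2*n))) K :=
  ∑ σ ∈ pfaffPerms n,
    ((Equiv.Perm.sign σ : ℤ) : MvPolynomial (Sym2 (Fin (2*n))) K) *
      ∏ k : Fin n,
        X (Sym2.mk (σ ⟨2*k.1, by have := k.2; omega⟩) (σ ⟨2*k.1+1, by have := k.2; omega⟩))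

instance (m : ℕ) : NeZero (2*(m+1)) := ⟨by omega⟩

namespace PfCyc

variable {m : ℕ}

/-- Even-position index. -/
def ev (k : Fin (m+1)) : Fin (2*(m+1)) := ⟨2*k.1, by have := k.2; omega⟩
/-- Odd-position index. -/
def od (k : Fin (m+1)) : Fin (2*(m+1)) := ⟨2*k.1+1, by have := k.2; omega⟩

lemma evod (j : Fin (2*(m+1))) : (∃ k, j = ev k) ∨ ∃ k, j = od k := by
  rcases Nat.even_or_odd j.1 with ⟨k, hk⟩ | ⟨k, hk⟩
  · exact .inl ⟨⟨k, by have := j.2; omega⟩, Fin.ext (by simp [ev]; omega)⟩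
  · exact .inr ⟨⟨k, by have := j.2; omega⟩, Fin.ext (by simp [od]; omega)⟩

lemma mem_pf {σ : Equiv.Perm (Fin (2*(m+1)))} :
    σ ∈ pfaffPerms (m+1) ↔
      (∀ k, σ (ev k) < σ (od k)) ∧ ∀ k l : Fin (m+1), k < l → σ (ev k) < σ (ev l) := by
  rw [pfaffPerms, Finset.mem_filter]
  exact and_iff_right (Finset.mem_univ _)

variable (σ : Equiv.Perm (Fin (2*(m+1))))

section PfFacts

variable (h1 : ∀ k, σ (ev k) < σ (od k))
  (h2 : ∀ k l : Fin (m+1), k < l → σ (ev k) < σ (ev l))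

include h1 h2 in
lemma sigma_zero : σ (ev 0) = 0 := by
  obtain ⟨j, hj⟩ : ∃ j, σ j = 0 := ⟨σ.symm 0, σ.apply_symm_apply 0⟩
  rcases evod j with ⟨k, rfl⟩ | ⟨k, rfl⟩
  · rcases eq_or_ne k 0 with rfl | hk
    · exact hj
    · have := h2 0 k (Fin.pos_of_ne_zero hk)
      rw [hj] at this
      exact absurd this (Fin.not_lt_zero _)
  · have := h1 k
    rw [hj] at this
    exact absurd this (Fin.not_lt_zero _)

end PfFacts

/-- The index set of pairs whose leading entry is below `σ (od 0)`. -/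
def Rset : Finset (Fin (m+1)) := univ.filter fun k => σ (ev k) < σ (od 0)

/-- Position where the special pair will be inserted. -/
noncomputable def Rf : Fin (m+1) :=
  if h : (Rset σ).Nonempty then (Rset σ).max' h else 0

section PfFacts2

variable (h1 : ∀ k, σ (ev k) < σ (od k))
  (h2 : ∀ k l : Fin (m+1), k < l → σ (ev k) < σ (ev l))

include h1 h2 in
lemma lt_iff_le_Rf (k : Fin (m+1)) : σ (ev k) < σ (od 0) ↔ k ≤ Rf σ := by
  have hne : (Rset σ).Nonempty := ⟨0, by simp only [Rset, Finset.mem_filter]; exact ⟨mem_univ _, h1 0⟩⟩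
  rw [Rf, dif_pos hne]
  constructor
  · intro h
    exact Finset.le_max' _ _ (by simp only [Rset, Finset.mem_filter]; exact ⟨mem_univ _, h⟩)
  · intro hk
    have hmem := (Rset σ).max'_mem hne
    simp only [Rset, Finset.mem_filter] at hmem
    rcases eq_or_lt_of_le hk with h | hlt
    · rw [h]; exact hmem.2
    · exact lt_trans (h2 _ _ hlt) hmem.2

end PfFacts2

/-- Cast equivalence between `Fin M` and the initial-segment subtype of `Fin L`. -/
def pcast {M L : ℕ} (h : M ≤ L) : Fin M ≃ {j : Fin L // j.1 < M} where
  toFun k := ⟨⟨k.1, k.2.trans_le h⟩, k.2⟩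
  invFun s := ⟨s.1.1, s.2⟩
  left_inv _ := rfl
  right_inv _ := rfl

/-- The cyclic shift on an initial segment of length `M`, extended by the identity. -/
def rho (M L : ℕ) [NeZero M] (h : M ≤ L) : Equiv.Perm (Fin L) :=
  (Equiv.addRight (1 : Fin M) * Equiv.addRight (1 : Fin M)).extendDomain (pcast h)

lemma sign_rho (M L : ℕ) [NeZero M] (h : M ≤ L) : Equiv.Perm.sign (rho M L h) = 1 := by
  rw [rho, Equiv.Perm.sign_extendDomain, map_mul, Int.units_mul_self]

lemma rho_val {M L : ℕ} [NeZero M] (h : M ≤ L) (hM : 2 ≤ M) {j : Fin L} (hj : j.1 < M) :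
    ((rho M L h) j).1 = (j.1 + 2) % M := by
  rw [rho, show ((Equiv.addRight (1 : Fin M) * Equiv.addRight (1 : Fin M)).extendDomain
      (pcast h)) j = ((pcast h) ((Equiv.addRight (1 : Fin M) * Equiv.addRight (1 : Fin M))
        ((pcast h).symm ⟨j, hj⟩)) : {x : Fin L // x.1 < M}) from
    Equiv.Perm.extendDomain_apply_subtype _ (pcast h) hj]
  show ((((⟨j.1, hj⟩ : Fin M) + 1) + 1 : Fin M)).1 = _
  have h1 : ((1 : Fin M)).1 = 1 := Nat.one_mod_eq_one.mpr (by omega)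
  rw [Fin.val_add, Fin.val_add, h1]
  show ((j.1 + 1) % M + 1) % M = (j.1 + 2) % M
  rw [Nat.mod_add_mod]

lemma rho_fix {M L : ℕ} [NeZero M] (h : M ≤ L) {j : Fin L} (hj : ¬ j.1 < M) :
    (rho M L h) j = j :=
  Equiv.Perm.extendDomain_apply_not_subtype _ _ hj

/-- The normalizing permutation: rotate the first `R+1` blocks and swap within. -/
noncomputable def beta (R : ℕ) (hR : 2*R+2 ≤ 2*(m+1)) : Equiv.Perm (Fin (2*(m+1))) :=
  haveI : NeZero (2*R+2) := ⟨by omega⟩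
  Equiv.swap ⟨0, by omega⟩ ⟨1, by omega⟩ * rho (2*R+2) (2*(m+1)) hR

lemma sign_beta (R : ℕ) (hR : 2*R+2 ≤ 2*(m+1)) : Equiv.Perm.sign (beta R hR) = -1 := by
  haveI : NeZero (2*R+2) := ⟨by omega⟩
  rw [beta, map_mul, sign_rho, mul_one, Equiv.Perm.sign_swap]
  exact Fin.ne_of_val_ne (show (0:ℕ) ≠ 1 by omega)

lemma beta_lt {R : ℕ} (hR : 2*R+2 ≤ 2*(m+1)) {j : Fin (2*(m+1))} (hj : j.1 < 2*R) :
    beta R hR j = ⟨j.1+2, by omega⟩ := by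
  haveI : NeZero (2*R+2) := ⟨by omega⟩
  have hv : ((rho (2*R+2) (2*(m+1)) hR) j).1 = j.1 + 2 := by
    rw [rho_val hR (by omega) (by omega), Nat.mod_eq_of_lt (by omega)]
  rw [beta, Equiv.Perm.mul_apply]
  rw [Equiv.swap_apply_of_ne_of_ne
      (Fin.ne_of_val_ne (by rw [hv]; exact (show j.1+2 ≠ 0 by omega)))
      (Fin.ne_of_val_ne (by rw [hv]; exact (show j.1+2 ≠ 1 by omega)))]
  exact Fin.ext hv

lemma beta_even {R : ℕ} (hR : 2*R+2 ≤ 2*(m+1)) :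
    beta R hR ⟨2*R, by omega⟩ = ⟨1, by omega⟩ := by
  haveI : NeZero (2*R+2) := ⟨by omega⟩
  have hv : ((rho (2*R+2) (2*(m+1)) hR) ⟨2*R, by omega⟩).1 = 0 := by
    rw [rho_val hR (by omega) (show (2*R:ℕ) < 2*R+2 by omega)]
    show (2*R+2) % (2*R+2) = 0
    exact Nat.mod_self _
  rw [beta, Equiv.Perm.mul_apply]
  have : (rho (2*R+2) (2*(m+1)) hR) ⟨2*R, by omega⟩ = ⟨0, by omega⟩ := Fin.ext hv
  rw [this, Equiv.swap_apply_left]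

lemma beta_odd {R : ℕ} (hR : 2*R+2 ≤ 2*(m+1)) :
    beta R hR ⟨2*R+1, by omega⟩ = ⟨0, by omega⟩ := by
  haveI : NeZero (2*R+2) := ⟨by omega⟩
  have hv : ((rho (2*R+2) (2*(m+1)) hR) ⟨2*R+1, by omega⟩).1 = 1 := by
    rw [rho_val hR (by omega) (show (2*R+1:ℕ) < 2*R+2 by omega)]
    show (2*R+3) % (2*R+2) = 1
    have : 2*R+3 = (2*R+2) + 1 := by omega
    rw [this, Nat.add_mod_left, Nat.one_mod_eq_one.mpr (by omega)]
  rw [beta, Equiv.Perm.mul_apply]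
  have : (rho (2*R+2) (2*(m+1)) hR) ⟨2*R+1, by omega⟩ = ⟨1, by omega⟩ := Fin.ext hv
  rw [this, Equiv.swap_apply_right]

lemma beta_gt {R : ℕ} (hR : 2*R+2 ≤ 2*(m+1)) {j : Fin (2*(m+1))} (hj : 2*R+1 < j.1) :
    beta R hR j = j := by
  haveI : NeZero (2*R+2) := ⟨by omega⟩
  rw [beta, Equiv.Perm.mul_apply, rho_fix hR (by omega)]
  exact Equiv.swap_apply_of_ne_of_ne
    (Fin.ne_of_val_ne (show j.1 ≠ 0 by omega))
    (Fin.ne_of_val_ne (show j.1 ≠ 1 by omega))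

lemma sign_addRight_one (k : ℕ) :
    Equiv.Perm.sign (Equiv.addRight (1 : Fin (k+1))) = (-1)^k := by
  have he : Equiv.addRight (1 : Fin (k+1)) = finRotate (k+1) :=
    Equiv.ext fun x => by rw [finRotate_succ_apply]; rfl
  rw [he, sign_finRotate, Nat.add_sub_cancel]

lemma sign_tau : Equiv.Perm.sign (Equiv.addRight (1 : Fin (2*(m+1)))) = -1 := by
  have h := sign_addRight_one (2*m+1)
  rw [Odd.neg_one_pow ⟨m, by ring⟩] at h
  exact h

lemma tauinv_val (x : Fin (2*(m+1))) :
    (((Equiv.addRight (1 : Fin (2*(m+1))))⁻¹) x).1 =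
      if x.1 = 0 then 2*(m+1)-1 else x.1 - 1 := by
  set y := ((Equiv.addRight (1 : Fin (2*(m+1))))⁻¹) x with hy
  have h : Equiv.addRight (1 : Fin (2*(m+1))) y = x := Equiv.apply_symm_apply _ x
  have hval : (y.1 + 1) % (2*(m+1)) = x.1 := by
    have := congrArg Fin.val h
    rw [Equiv.coe_addRight] at this
    rw [← this, Fin.val_add]
    congr 1
  have hyb := y.2
  have hxb := x.2
  rcases Nat.lt_or_ge (y.1+1) (2*(m+1)) with hlt | hge
  · rw [Nat.mod_eq_of_lt hlt] at hval
    split_ifs <;> omega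
  · have heq : y.1 + 1 = 2*(m+1) := by omega
    rw [heq, Nat.mod_self] at hval
    split_ifs <;> omega

/-- The forward map on Pfaff permutations. -/
noncomputable def Fmap (σ : Equiv.Perm (Fin (2*(m+1)))) : Equiv.Perm (Fin (2*(m+1))) :=
  (Equiv.addRight (1 : Fin (2*(m+1))))⁻¹ * σ * beta (Rf σ).1 (by have := (Rf σ).2; omega)

lemma Fmap_apply (x : Fin (2*(m+1))) :
    Fmap σ x = (Equiv.addRight (1 : Fin (2*(m+1))))⁻¹
      (σ (beta (Rf σ).1 (by have := (Rf σ).2; omega) x)) := rfl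

lemma Fmap_ev_lt {k : Fin (m+1)} (hk : k.1 < (Rf σ).1) :
    Fmap σ (ev k) = (Equiv.addRight (1 : Fin (2*(m+1))))⁻¹ (σ (ev ⟨k.1+1, by omega⟩)) := by
  rw [Fmap_apply, beta_lt _ (by show 2*k.1 < 2*(Rf σ).1; omega)]
  rfl

lemma Fmap_od_lt {k : Fin (m+1)} (hk : k.1 < (Rf σ).1) :
    Fmap σ (od k) = (Equiv.addRight (1 : Fin (2*(m+1))))⁻¹ (σ (od ⟨k.1+1, by omega⟩)) := by
  rw [Fmap_apply, beta_lt _ (by show 2*k.1+1 < 2*(Rf σ).1; omega)]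
  rfl

lemma Fmap_ev_eq :
    Fmap σ (ev (Rf σ)) = (Equiv.addRight (1 : Fin (2*(m+1))))⁻¹ (σ (od 0)) := by
  rw [Fmap_apply]
  have : ev (Rf σ) = ⟨2*(Rf σ).1, by have := (Rf σ).2; omega⟩ := rfl
  rw [this, beta_even]
  rfl

lemma Fmap_od_eq :
    Fmap σ (od (Rf σ)) = (Equiv.addRight (1 : Fin (2*(m+1))))⁻¹ (σ (ev 0)) := by
  rw [Fmap_apply]
  have : od (Rf σ) = ⟨2*(Rf σ).1+1, by have := (Rf σ).2; omega⟩ := rfl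
  rw [this, beta_odd]
  rfl

lemma Fmap_ev_gt {k : Fin (m+1)} (hk : (Rf σ).1 < k.1) :
    Fmap σ (ev k) = (Equiv.addRight (1 : Fin (2*(m+1))))⁻¹ (σ (ev k)) := by
  rw [Fmap_apply, beta_gt _ (by show 2*(Rf σ).1+1 < 2*k.1; omega)]

lemma Fmap_od_gt {k : Fin (m+1)} (hk : (Rf σ).1 < k.1) :
    Fmap σ (od k) = (Equiv.addRight (1 : Fin (2*(m+1))))⁻¹ (σ (od k)) := by
  rw [Fmap_apply, beta_gt _ (by show 2*(Rf σ).1+1 < 2*k.1+1; omega)]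

lemma Fmap_sign : Equiv.Perm.sign (Fmap σ) = Equiv.Perm.sign σ := by
  rw [Fmap, map_mul, map_mul, sign_beta, map_inv, sign_tau]
  rcases Int.units_eq_one_or (Equiv.Perm.sign σ) with h | h <;> rw [h] <;> decide

section Main

variable (h1 : ∀ k, σ (ev k) < σ (od k))
  (h2 : ∀ k l : Fin (m+1), k < l → σ (ev k) < σ (ev l))

include h1 h2 in
lemma Fmap_mem : Fmap σ ∈ pfaffPerms (m+1) := by
  have h0 : σ (ev 0) = 0 := sigma_zero σ h1 h2
  have h0v : (σ (ev (0 : Fin (m+1)))).1 = 0 := by rw [h0]; rfl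
  have hodpos : ∀ k, 0 < (σ (od k)).1 := fun k => by
    have := Fin.lt_def.mp (h1 k); omega
  have hevpos : ∀ k : Fin (m+1), k ≠ 0 → 0 < (σ (ev k)).1 := fun k hk => by
    have := Fin.lt_def.mp (h2 0 k (Fin.pos_of_ne_zero hk)); omega
  have hRle : ∀ k : Fin (m+1), (σ (ev k)).1 < (σ (od 0)).1 ↔ k.1 ≤ (Rf σ).1 := fun k => by
    rw [← Fin.lt_def, lt_iff_le_Rf σ h1 h2 k, Fin.le_def]
  have hN : ∀ x : Fin (2*(m+1)), x.1 < 2*(m+1) := fun x => x.2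
  rw [mem_pf]
  constructor
  · intro k
    rw [Fin.lt_def]
    rcases lt_trichotomy k.1 (Rf σ).1 with hk | hk | hk
    · rw [Fmap_ev_lt σ hk, Fmap_od_lt σ hk, tauinv_val, tauinv_val]
      have ha := hevpos ⟨k.1+1, by omega⟩ (fun h => by have := congrArg Fin.val h; simp at this)
      have hb := hodpos ⟨k.1+1, by omega⟩
      have hc := Fin.lt_def.mp (h1 ⟨k.1+1, by omega⟩)
      split_ifs <;> omega
    · have hk' : k = Rf σ := Fin.ext hk
      rw [hk', Fmap_ev_eq, Fmap_od_eq, tauinv_val, tauinv_val, h0]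
      have ha := hodpos 0
      have hb := hN (σ (od 0))
      simp only [Fin.val_zero]
      split_ifs <;> omega
    · rw [Fmap_ev_gt σ hk, Fmap_od_gt σ hk, tauinv_val, tauinv_val]
      have ha := hevpos k (fun h => by rw [h] at hk; simp at hk)
      have hb := hodpos k
      have hc := Fin.lt_def.mp (h1 k)
      split_ifs <;> omega
  · intro k l hkl
    have hkl' : k.1 < l.1 := hkl
    rw [Fin.lt_def]
    rcases lt_trichotomy k.1 (Rf σ).1 with hk | hk | hk
    · rcases lt_trichotomy l.1 (Rf σ).1 with hl | hl | hl
      · rw [Fmap_ev_lt σ hk, Fmap_ev_lt σ hl, tauinv_val, tauinv_val]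
        have ha := hevpos ⟨k.1+1, by omega⟩ (fun h => by have := congrArg Fin.val h; simp at this)
        have hb := hevpos ⟨l.1+1, by omega⟩ (fun h => by have := congrArg Fin.val h; simp at this)
        have hc := Fin.lt_def.mp (h2 ⟨k.1+1, by omega⟩ ⟨l.1+1, by omega⟩ (by rw [Fin.lt_def]; simpa using hkl'))
        split_ifs <;> omega
      · have hl' : l = Rf σ := Fin.ext hl
        rw [hl', Fmap_ev_lt σ hk, Fmap_ev_eq, tauinv_val, tauinv_val]
        have ha := hevpos ⟨k.1+1, by omega⟩ (fun h => by have := congrArg Fin.val h; simp at this)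
        have hb := hodpos 0
        have hc : (σ (ev ⟨k.1+1, by omega⟩)).1 < (σ (od 0)).1 :=
          (hRle ⟨k.1+1, by omega⟩).mpr (by simpa using Nat.succ_le_of_lt hk)
        split_ifs <;> omega
      · rw [Fmap_ev_lt σ hk, Fmap_ev_gt σ hl, tauinv_val, tauinv_val]
        have ha := hevpos ⟨k.1+1, by omega⟩ (fun h => by have := congrArg Fin.val h; simp at this)
        have hb := hevpos l (fun h => by rw [h] at hl; simp at hl)
        have hc := Fin.lt_def.mp (h2 ⟨k.1+1, by omega⟩ l (by rw [Fin.lt_def]; show k.1+1 < l.1; omega))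
        split_ifs <;> omega
    · have hk' : k = Rf σ := Fin.ext hk
      have hl : (Rf σ).1 < l.1 := by omega
      rw [hk', Fmap_ev_eq, Fmap_ev_gt σ hl, tauinv_val, tauinv_val]
      have ha := hodpos 0
      have hb := hevpos l (fun h => by rw [h] at hl; simp at hl)
      have hne : (σ (od 0)).1 ≠ (σ (ev l)).1 := fun h => by
        have : od (0 : Fin (m+1)) = ev l := σ.injective (Fin.ext h)
        have := congrArg Fin.val this
        change 2*(0:Fin (m+1)).1+1 = 2*l.1 at this
        omega
      have hc : ¬ (σ (ev l)).1 < (σ (od 0)).1 := fun h => by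
        have := (hRle l).mp h; omega
      split_ifs <;> omega
    · have hl : (Rf σ).1 < l.1 := by omega
      rw [Fmap_ev_gt σ hk, Fmap_ev_gt σ hl, tauinv_val, tauinv_val]
      have ha := hevpos k (fun h => by rw [h] at hk; simp at hk)
      have hb := hevpos l (fun h => by rw [h] at hl; simp at hl)
      have hc := Fin.lt_def.mp (h2 k l hkl)
      split_ifs <;> omega

end Main

/-- The index rotation used to re-align the product of variables. -/
noncomputable def piRot (R : ℕ) (hR : R+1 ≤ m+1) : Equiv.Perm (Fin (m+1)) :=
  (Equiv.addRight (1 : Fin (R+1))).extendDomain (pcast hR)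

lemma piRot_lt {R : ℕ} (hR : R+1 ≤ m+1) {k : Fin (m+1)} (hk : k.1 < R) :
    piRot R hR k = ⟨k.1+1, by omega⟩ := by
  rw [piRot, show ((Equiv.addRight (1 : Fin (R+1))).extendDomain (pcast hR)) k =
      ((pcast hR) ((Equiv.addRight (1 : Fin (R+1)))
        ((pcast hR).symm ⟨k, show k.1 < R+1 by omega⟩)) : {x : Fin (m+1) // x.1 < R+1}) from
    Equiv.Perm.extendDomain_apply_subtype _ (pcast hR) (show k.1 < R+1 by omega)]
  apply Fin.ext
  show (((⟨k.1, by omega⟩ : Fin (R+1)) + 1 : Fin (R+1))).1 = k.1+1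
  have h1 : ((1 : Fin (R+1))).1 = 1 := Nat.one_mod_eq_one.mpr (by omega)
  rw [Fin.val_add, h1]
  show (k.1 + 1) % (R+1) = k.1 + 1
  exact Nat.mod_eq_of_lt (by omega)

lemma piRot_eq {R : ℕ} (hR : R+1 ≤ m+1) :
    piRot R hR ⟨R, by omega⟩ = ⟨0, by omega⟩ := by
  rw [piRot, show ((Equiv.addRight (1 : Fin (R+1))).extendDomain (pcast hR))
      (⟨R, by omega⟩ : Fin (m+1)) =
      ((pcast hR) ((Equiv.addRight (1 : Fin (R+1)))
        ((pcast hR).symm ⟨⟨R, by omega⟩, show R < R+1 by omega⟩)) : {x : Fin (m+1) // x.1 < R+1}) from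
    Equiv.Perm.extendDomain_apply_subtype _ (pcast hR) (show R < R+1 by omega)]
  apply Fin.ext
  show (R + 1 % (R+1)) % (R+1) = 0
  rw [Nat.add_mod_mod, Nat.mod_self]

lemma piRot_gt {R : ℕ} (hR : R+1 ≤ m+1) {k : Fin (m+1)} (hk : R < k.1) :
    piRot R hR k = k :=
  Equiv.Perm.extendDomain_apply_not_subtype _ _ (by omega)

section Term

variable {K : Type*} [CommRing K]

lemma prod_eq :
    (∏ k : Fin (m+1), (X (Sym2.mk ((Fmap σ) (ev k)) ((Fmap σ) (od k)))
        : MvPolynomial (Sym2 (Fin (2*(m+1)))) K)) =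
    ∏ k : Fin (m+1),
      X (Sym2.mk ((Equiv.addRight (1 : Fin (2*(m+1))))⁻¹ (σ (ev k)))
        ((Equiv.addRight (1 : Fin (2*(m+1))))⁻¹ (σ (od k)))) := by
  refine Fintype.prod_equiv (piRot (Rf σ).1 (by have := (Rf σ).2; omega)) _ _ fun k => ?_
  rcases lt_trichotomy k.1 (Rf σ).1 with hk | hk | hk
  · rw [piRot_lt _ hk, Fmap_ev_lt σ hk, Fmap_od_lt σ hk]
  · have hk' : k = Rf σ := Fin.ext hk
    subst hk'
    rw [piRot_eq, Fmap_ev_eq, Fmap_od_eq]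
    exact congrArg X Sym2.eq_swap
  · rw [piRot_gt _ hk, Fmap_ev_gt σ hk, Fmap_od_gt σ hk]

end Term

lemma Fmap_eq_decomp :
    σ = Equiv.addRight (1 : Fin (2*(m+1))) * Fmap σ *
      (beta (Rf σ).1 (by have := (Rf σ).2; omega))⁻¹ := by
  rw [Fmap]
  group

lemma Fmap_inj (σ₁ σ₂ : Equiv.Perm (Fin (2*(m+1))))
    (hm1 : σ₁ ∈ pfaffPerms (m+1)) (hm2 : σ₂ ∈ pfaffPerms (m+1))
    (h : Fmap σ₁ = Fmap σ₂) : σ₁ = σ₂ := by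
  obtain ⟨h11, h12⟩ := mem_pf.mp hm1
  obtain ⟨h21, h22⟩ := mem_pf.mp hm2
  have e1 : Fmap σ₁ (od (Rf σ₁)) = (Equiv.addRight (1 : Fin (2*(m+1))))⁻¹ 0 := by
    rw [Fmap_od_eq, sigma_zero σ₁ h11 h12]
  have e2 : Fmap σ₂ (od (Rf σ₂)) = (Equiv.addRight (1 : Fin (2*(m+1))))⁻¹ 0 := by
    rw [Fmap_od_eq, sigma_zero σ₂ h21 h22]
  have hod : od (Rf σ₁) = od (Rf σ₂) := by
    apply (Fmap σ₁).injective
    rw [e1, h, e2]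
  have hR : Rf σ₁ = Rf σ₂ := by
    have := congrArg Fin.val hod
    simp only [od] at this
    exact Fin.ext (by omega)
  rw [Fmap_eq_decomp σ₁, Fmap_eq_decomp σ₂, h]
  simp only [hR]

end PfCyc

open PfCyc in
/-- The Pfaffian polynomial of symmetric indeterminates is invariant under the cyclic
permutation `σ : i ↦ i + 1 (mod 2n)`, acting by `σ · a i j = a (σ⁻¹ i) (σ⁻¹ j)`. -/
theorem pfPoly_cyclic_invariant (m : ℕ) (K : Type*) [CommRing K] :
    rename (Sym2.map ⇑(Equiv.addRight (1 : Fin (2*(m+1))))⁻¹) (pfPoly (m+1) K) =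
      pfPoly (m+1) K := by
  classical
  rw [pfPoly, map_sum]
  refine Finset.sum_bij (fun σ _ => Fmap σ) (fun σ hσ => ?_) (fun σ₁ h₁ σ₂ h₂ h => Fmap_inj σ₁ σ₂ h₁ h₂ h) (fun b hb => ?_) (fun σ hσ => ?_)
  · obtain ⟨h1, h2⟩ := mem_pf.mp hσ
    exact Fmap_mem σ h1 h2
  · obtain ⟨a, ha, hab⟩ := Finset.surj_on_of_inj_on_of_card_le
      (fun (σ : Equiv.Perm (Fin (2*(m+1)))) (_ : σ ∈ pfaffPerms (m+1)) => Fmap σ)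
      (fun σ hσ => by obtain ⟨h1, h2⟩ := mem_pf.mp hσ; exact Fmap_mem σ h1 h2)
      (fun σ₁ σ₂ hσ₁ hσ₂ h => Fmap_inj σ₁ σ₂ hσ₁ hσ₂ h) le_rfl b hb
    exact ⟨a, ha, hab.symm⟩
  · obtain ⟨h1, h2⟩ := mem_pf.mp hσ
    rw [map_mul, map_prod, map_intCast, Fmap_sign σ]
    congr 1
    calc ∏ k : Fin (m+1),
          (rename (Sym2.map ⇑(Equiv.addRight (1 : Fin (2*(m+1))))⁻¹))
            (X (Sym2.mk (σ (ev k)) (σ (od k))))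
        = ∏ k : Fin (m+1),
            X (Sym2.mk ((Equiv.addRight (1 : Fin (2*(m+1))))⁻¹ (σ (ev k)))
              ((Equiv.addRight (1 : Fin (2*(m+1))))⁻¹ (σ (od k)))) := by
          refine Finset.prod_congr rfl fun k _ => ?_
          rw [rename_X, Sym2.map_mk]
      _ = ∏ k : Fin (m+1), X (Sym2.mk ((Fmap σ) (ev k)) ((Fmap σ) (od k))) :=
          (prod_eq σ).symm
end
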